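/- arXiv:1208.2585 — 4 statements merged into one kernel-verified Lean document; each statement's English description precedes it below -/
import Mathlib

section
/- The ASM selection-sort program, started from an initial state with n ≥ 1, i = 0, j = 1, and arbitrary integer values F(0),…,F(n−1), terminates, and in the terminal state j = n = i + 1 and F(0) ≤ F(1) ≤ … ≤ F(n−1). -/
/-- A state of the selection-sort ASM: nullary symbols `i`, `j`, `n` and a
unary function `F` over the integers. -/
structure SortState where
  i : ℤ
  j : ℤ
  n : ℤ
  F : ℤ → ℤ

/-- One transition step of the ASM
`if j = n then (if i+1 ≠ n then do {i := i+1; j := i+2})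
 else do {if F(i) > F(j) then do {F(i) := F(j); F(j) := F(i)}; j := j+1}`,
with all enabled assignments applied simultaneously (right-hand sides evaluated
in the current state).  On terminal states (no enabled assignment) it is the identity. -/
noncomputable def sortStep (X : SortState) : SortState :=
  if X.j = X.n then
    (if X.i + 1 ≠ X.n then { X with i := X.i + 1, j := X.i + 2 } else X)
  else
    { X with
      j := X.j + 1,
      F := if X.F X.i > X.F X.j then
          Function.update (Function.update X.F X.i (X.F X.j)) X.j (X.F X.i)
        else X.F }

/-- A state is terminal when no assignment is enabled: `j = n` and `i + 1 = n`. -/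
def sortTerminal (X : SortState) : Prop := X.j = X.n ∧ X.i + 1 = X.n

/-- Legal initial states: `n ≥ 1`, `i = 0`, `j = 1` (and arbitrary `F`). -/
def sortInitial (X : SortState) : Prop := 1 ≤ X.n ∧ X.i = 0 ∧ X.j = 1

def SortInv (X : SortState) : Prop :=
  0 ≤ X.i ∧ X.i + 1 ≤ X.j ∧ X.j ≤ X.n ∧
  (∀ a b : ℤ, 0 ≤ a → a < X.i → a < b → b < X.n → X.F a ≤ X.F b) ∧
  (∀ b : ℤ, X.i < b → b < X.j → X.F X.i ≤ X.F b)

def sortMeasure (X : SortState) : ℤ := (X.n - X.i) * X.n + (X.n - X.j)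

lemma sortMeasure_nonneg (X : SortState) (h : SortInv X) : 0 ≤ sortMeasure X := by
  obtain ⟨h0, h1, h2, _, _⟩ := h
  have hn : 1 ≤ X.n := by linarith
  unfold sortMeasure
  nlinarith

lemma step_inv (X : SortState) (h : SortInv X) (ht : ¬ sortTerminal X) :
    SortInv (sortStep X) ∧ sortMeasure (sortStep X) < sortMeasure X := by
  obtain ⟨h0, h1, h2, h3, h4⟩ := h
  by_cases hj : X.j = X.n
  · have hi : X.i + 1 ≠ X.n := fun hh => ht ⟨hj, hh⟩
    have hs : sortStep X = { X with i := X.i + 1, j := X.i + 2 } := by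
      simp [sortStep, hj, hi]
    have hin : X.i + 1 < X.n := by
      rcases lt_or_eq_of_le (by omega : X.i + 1 ≤ X.n) with h' | h'
      · exact h'
      · exact absurd h' hi
    rw [hs]
    constructor
    · refine ⟨by dsimp; omega, by dsimp; omega, by dsimp; omega, ?_, ?_⟩
      · intro a b ha hai hab hb
        dsimp at *
        rcases lt_or_eq_of_le (by omega : a ≤ X.i) with h' | h'
        · exact h3 a b ha h' hab hb
        · subst h'; exact h4 b hab (hj ▸ hb)
      · intro b hb1 hb2
        dsimp at hb1 hb2
        omega
    · dsimp [sortMeasure]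
      have h5 : (X.n - (X.i + 1)) * X.n = (X.n - X.i) * X.n - X.n := by ring
      rw [← hj]
      linarith
  · have hjn : X.j < X.n := lt_of_le_of_ne h2 hj
    have hij : X.i ≠ X.j := by omega
    by_cases hsw : X.F X.i > X.F X.j
    · have hs : sortStep X = { X with j := X.j + 1, F := Function.update (Function.update X.F X.i (X.F X.j)) X.j (X.F X.i) } := by
        simp [sortStep, hj, hsw]
      set F' := Function.update (Function.update X.F X.i (X.F X.j)) X.j (X.F X.i) with hF'
      have hFi : F' X.i = X.F X.j := by
        simp [hF', Function.update, hij]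
      have hFj : F' X.j = X.F X.i := by
        simp [hF', Function.update]
      have hFo : ∀ c : ℤ, c ≠ X.i → c ≠ X.j → F' c = X.F c := by
        intro c hc1 hc2
        simp [hF', Function.update, hc1, hc2]
      rw [hs]
      constructor
      · refine ⟨by dsimp; omega, by dsimp; omega, by dsimp; omega, ?_, ?_⟩
        · intro a b ha hai hab hb
          dsimp at *
          have hai' : a ≠ X.i := by omega
          have haj' : a ≠ X.j := by omega
          rw [hFo a hai' haj']
          by_cases hb1 : b = X.i
          · subst hb1; rw [hFi]; exact h3 a X.j ha hai (by omega) hjn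
          · by_cases hb2 : b = X.j
            · subst hb2; rw [hFj]; exact h3 a X.i ha hai (by omega) (by omega)
            · rw [hFo b hb1 hb2]; exact h3 a b ha hai hab hb
        · intro b hb1 hb2
          dsimp at *
          rw [hFi]
          by_cases hb3 : b = X.j
          · subst hb3; rw [hFj]; linarith
          · have hb4 : b < X.j := by omega
            rw [hFo b (by omega) hb3]
            have := h4 b hb1 hb4
            linarith
      · dsimp [sortMeasure]; omega
    · have hs : sortStep X = { X with j := X.j + 1 } := by
        simp [sortStep, hj, hsw]
      rw [hs]
      constructor
      · refine ⟨by dsimp; omega, by dsimp; omega, by dsimp; omega, ?_, ?_⟩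
        · intro a b ha hai hab hb
          exact h3 a b ha hai hab hb
        · intro b hb1 hb2
          dsimp at *
          by_cases hb3 : b = X.j
          · subst hb3; linarith
          · exact h4 b hb1 (by omega)
      · dsimp [sortMeasure]; omega

lemma sort_terminates_aux (m : ℕ) : ∀ X : SortState, SortInv X → (sortMeasure X).toNat ≤ m →
    ∃ k, sortTerminal (sortStep^[k] X) ∧ SortInv (sortStep^[k] X) := by
  induction m with
  | zero =>
    intro X hX hm
    by_cases ht : sortTerminal X
    · exact ⟨0, ht, hX⟩
    · obtain ⟨hInv', hlt⟩ := step_inv X hX ht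
      have := sortMeasure_nonneg _ hInv'
      omega
  | succ m ih =>
    intro X hX hm
    by_cases ht : sortTerminal X
    · exact ⟨0, ht, hX⟩
    · obtain ⟨hInv', hlt⟩ := step_inv X hX ht
      obtain ⟨k, hk1, hk2⟩ := ih (sortStep X) hInv' (by
        have := sortMeasure_nonneg _ hInv'
        omega)
      refine ⟨k + 1, ?_, ?_⟩
      · rw [Function.iterate_succ_apply]; exact hk1
      · rw [Function.iterate_succ_apply]; exact hk2

/-- from any initial state with `n ≥ 1`, `i = 0`, `j = 1` the sorting ASM
terminates, and in the terminal state `j = n = i + 1` and `F(0) ≤ F(1) ≤ … ≤ F(n−1)`. -/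
theorem sort_terminates_and_sorts (X₀ : SortState) (h₀ : sortInitial X₀) :
    ∃ k : ℕ, sortTerminal (sortStep^[k] X₀) ∧
      (sortStep^[k] X₀).j = (sortStep^[k] X₀).n ∧
      (sortStep^[k] X₀).n = (sortStep^[k] X₀).i + 1 ∧
      ∀ a b : ℤ, 0 ≤ a → a ≤ b → b < (sortStep^[k] X₀).n →
        (sortStep^[k] X₀).F a ≤ (sortStep^[k] X₀).F b := by
  obtain ⟨hn, hi, hj⟩ := h₀
  have hInv : SortInv X₀ := by
    refine ⟨by omega, by omega, by omega, ?_, ?_⟩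
    · intro a b ha hai hab hb; omega
    · intro b hb1 hb2; omega
  obtain ⟨k, hterm, hInv'⟩ := sort_terminates_aux (sortMeasure X₀).toNat X₀ hInv le_rfl
  obtain ⟨htj, hti⟩ := hterm
  obtain ⟨g0, g1, g2, g3, g4⟩ := hInv'
  refine ⟨k, ⟨htj, hti⟩, htj, hti.symm, ?_⟩
  intro a b ha hab hb
  rcases lt_or_eq_of_le hab with h' | h'
  · exact g3 a b ha (by omega) h' hb
  · subst h'; exact le_refl _
end

section
/- Each transition of the ASM selection-sort program preserves the multiset of values {F(0),…,F(n−1)}: the function F in the next state is a permutation (on {0,…,n−1}) of F in the current state. -/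
lemma sortInv (X₀ : SortState) (h₀ : sortInitial X₀) (k : ℕ) :
    0 ≤ (sortStep^[k] X₀).i ∧ (sortStep^[k] X₀).i < (sortStep^[k] X₀).j ∧
    (sortStep^[k] X₀).j ≤ (sortStep^[k] X₀).n ∧ (sortStep^[k] X₀).i < (sortStep^[k] X₀).n := by
  induction k with
  | zero =>
    obtain ⟨h1, h2, h3⟩ := h₀
    simp [h2, h3]; omega
  | succ k ih =>
    rw [Function.iterate_succ_apply']
    set X := sortStep^[k] X₀ with hXdef
    obtain ⟨h1, h2, h3, h4⟩ := ih
    unfold sortStep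
    by_cases hjn : X.j = X.n
    · rw [if_pos hjn]
      by_cases hin : X.i + 1 ≠ X.n
      · rw [if_pos hin]; dsimp; omega
      · rw [if_neg hin]; exact ⟨h1, h2, h3, h4⟩
    · rw [if_neg hjn]; dsimp; omega

lemma map_perm_range (σ : Equiv.Perm ℤ) (N : ℕ)
    (h : ∀ a : ℤ, 0 ≤ a → a < N → 0 ≤ σ a ∧ σ a < N) :
    ((Multiset.range N).map (fun a : ℕ => σ (a : ℤ))) =
      ((Multiset.range N).map (fun a : ℕ => (a : ℤ))) := by
  have hnod : ((Multiset.range N).map (fun a : ℕ => (a : ℤ))).Nodup :=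
    (Multiset.nodup_range N).map (fun a b => by exact_mod_cast id)
  have hnod2 : ((Multiset.range N).map (fun a : ℕ => σ (a : ℤ))).Nodup := by
    have : (fun a : ℕ => σ (a : ℤ)) = σ ∘ (fun a : ℕ => (a : ℤ)) := rfl
    rw [this, ← Multiset.map_map]
    exact hnod.map σ.injective
  have hsub : ((Multiset.range N).map (fun a : ℕ => σ (a : ℤ))) ⊆
      ((Multiset.range N).map (fun a : ℕ => (a : ℤ))) := by
    intro b hb
    simp only [Multiset.mem_map, Multiset.mem_range] at hb ⊢
    obtain ⟨a, ha, rfl⟩ := hb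
    have hb' := h a (by positivity) (by exact_mod_cast ha)
    refine ⟨(σ a).toNat, ?_, ?_⟩ <;> omega
  have hle := Multiset.le_iff_subset hnod2 |>.mpr hsub
  have hcard : ((Multiset.range N).map (fun a : ℕ => (a : ℤ))).card ≤
      ((Multiset.range N).map (fun a : ℕ => σ (a : ℤ))).card := by
    simp
  exact Multiset.eq_of_le_of_card_le hle hcard


/-- each transition of the sorting ASM (from a reachable state) preserves
the multiset of values `{F(0),…,F(n−1)}`: the function `F` in the next state is a
permutation (on `{0,…,n−1}`) of `F` in the current state. -/
theorem sortStep_preserves_multiset (X₀ X : SortState) (h₀ : sortInitial X₀)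
    (k : ℕ) (hX : X = sortStep^[k] X₀) :
    (sortStep X).n = X.n ∧
    (∃ σ : Equiv.Perm ℤ,
      (∀ a : ℤ, 0 ≤ a → a < X.n → (sortStep X).F a = X.F (σ a)) ∧
      (∀ a : ℤ, 0 ≤ a → a < X.n → 0 ≤ σ a ∧ σ a < X.n)) ∧
    ((Multiset.range X.n.toNat).map fun a : ℕ => (sortStep X).F (a : ℤ)) =
      ((Multiset.range X.n.toNat).map fun a : ℕ => X.F (a : ℤ)) := by
  have hinv := sortInv X₀ h₀ k
  rw [← hX] at hinv
  obtain ⟨h1, h2, h3, h4⟩ := hinv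
  -- headline: get n and F' description
  have key : (sortStep X).n = X.n ∧
      (∃ σ : Equiv.Perm ℤ,
        (∀ a : ℤ, 0 ≤ a → a < X.n → (sortStep X).F a = X.F (σ a)) ∧
        (∀ a : ℤ, 0 ≤ a → a < X.n → 0 ≤ σ a ∧ σ a < X.n)) := by
    unfold sortStep
    by_cases hjn : X.j = X.n
    · rw [if_pos hjn]
      by_cases hin : X.i + 1 ≠ X.n
      · rw [if_pos hin]
        exact ⟨rfl, 1, fun a _ _ => rfl, fun a ha hb => by simpa using ⟨ha, hb⟩⟩
      · rw [if_neg hin]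
        exact ⟨rfl, 1, fun a _ _ => rfl, fun a ha hb => by simpa using ⟨ha, hb⟩⟩
    · rw [if_neg hjn]
      refine ⟨rfl, ?_⟩
      by_cases hF : X.F X.i > X.F X.j
      · refine ⟨Equiv.swap X.i X.j, fun a ha hb => ?_, fun a ha hb => ?_⟩
        · simp only [hF, if_true]
          rcases eq_or_ne a X.j with rfl | haj
          · simp [Equiv.swap_apply_right]
          · rw [Function.update_of_ne haj]
            rcases eq_or_ne a X.i with rfl | hai
            · simp [Equiv.swap_apply_left]
            · rw [Function.update_of_ne hai, Equiv.swap_apply_of_ne_of_ne hai haj]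
        · rcases eq_or_ne a X.j with rfl | haj
          · rw [Equiv.swap_apply_right]; omega
          · rcases eq_or_ne a X.i with rfl | hai
            · rw [Equiv.swap_apply_left]; omega
            · rw [Equiv.swap_apply_of_ne_of_ne hai haj]; omega
      · simp only [hF, if_false]
        exact ⟨1, fun a _ _ => rfl, fun a ha hb => by simpa using ⟨ha, hb⟩⟩
  obtain ⟨hn, σ, hσ1, hσ2⟩ := key
  refine ⟨hn, ⟨σ, hσ1, hσ2⟩, ?_⟩
  have hN : ((X.n.toNat : ℤ)) = X.n := Int.toNat_of_nonneg (by omega)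
  have step1 : ((Multiset.range X.n.toNat).map fun a : ℕ => (sortStep X).F (a : ℤ)) =
      ((Multiset.range X.n.toNat).map fun a : ℕ => X.F (σ (a : ℤ))) := by
    apply Multiset.map_congr rfl
    intro a ha
    rw [Multiset.mem_range] at ha
    exact hσ1 a (by positivity) (by omega)
  rw [step1]
  have : (fun a : ℕ => X.F (σ (a : ℤ))) = X.F ∘ (fun a : ℕ => σ (a : ℤ)) := rfl
  rw [this, ← Multiset.map_map]
  rw [map_perm_range σ X.n.toNat (fun a ha hb => by obtain ⟨c1, c2⟩ := hσ2 a ha (by omega); exact ⟨c1, by omega⟩)]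
  rw [Multiset.map_map]
  rfl
end

section
/- ASM transitions respect isomorphisms: if ζ : X ≅ Y is an isomorphism of structures over the program's vocabulary, then ζ maps Δ⁺_P(X) to Δ⁺_P(Y), i.e., an update f(ā) ↦ b belongs to Δ⁺_P(X) iff f(ζ(ā)) ↦ ζ(b) belongs to Δ⁺_P(Y). Consequently ζ is also an isomorphism from τ(X) to τ(Y). -/
/-- Ground terms over a vocabulary: a type `F` of function symbols with arities `ar`. -/
inductive Term (F : Type) (ar : F → ℕ) : Type
  | app (f : F) (args : Fin (ar f) → Term F ar) : Term F ar

/-- A (first-order) structure over the vocabulary `(F, ar)` with carrier `D`: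
an interpretation of each `k`-ary symbol as a `k`-ary function on `D`. -/
structure Struc (F : Type) (ar : F → ℕ) (D : Type) where
  interp : (f : F) → (Fin (ar f) → D) → D

/-- Evaluation of a ground term in a structure. -/
def eval {F : Type} {ar : F → ℕ} {D : Type} (X : Struc F ar D) : Term F ar → D
  | .app f args => X.interp f fun i => eval X (args i)

/-- Propositional combinations of equalities between ground terms. -/
inductive Cond (F : Type) (ar : F → ℕ) : Type
  | eq (s t : Term F ar)
  | not (c : Cond F ar)
  | and (c d : Cond F ar)
  | or (c d : Cond F ar)

/-- Truth of a condition in a structure. -/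
def condHolds {F : Type} {ar : F → ℕ} {D : Type} (X : Struc F ar D) : Cond F ar → Prop
  | .eq s t => eval X s = eval X t
  | .not c => ¬ condHolds X c
  | .and c d => condHolds X c ∧ condHolds X d
  | .or c d => condHolds X c ∨ condHolds X d

/-- ASM programs: assignments `f(s₁,…,sₙ) := t`, conditionals, and parallel composition. -/
inductive Prog (F : Type) (ar : F → ℕ) : Type
  | skip
  | assign (f : F) (args : Fin (ar f) → Term F ar) (rhs : Term F ar)
  | cond (c : Cond F ar) (thn els : Prog F ar)
  | par (p q : Prog F ar)

/-- A location `f(ā)` in a structure with carrier `D`. -/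
def Loc (F : Type) (ar : F → ℕ) (D : Type) : Type := Σ f : F, Fin (ar f) → D

open Classical in
/-- The proposed update set Δ⁺_P(X): a singleton for an assignment, the update set of
the selected branch for a conditional, and the union for parallel composition. -/
noncomputable def deltaPlus {F : Type} {ar : F → ℕ} {D : Type} :
    Prog F ar → Struc F ar D → Set (Loc F ar D × D)
  | .skip, _ => ∅
  | .assign f args rhs, X => {(⟨f, fun i => eval X (args i)⟩, eval X rhs)}
  | .cond c p q, X => if condHolds X c then deltaPlus p X else deltaPlus q X
  | .par p q, X => deltaPlus p X ∪ deltaPlus q X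

/-- An update set is clash-free if no two of its updates share a location but differ in value. -/
def clashFree {F : Type} {ar : F → ℕ} {D : Type} (Δ : Set (Loc F ar D × D)) : Prop :=
  ∀ (l : Loc F ar D) (b b' : D), (l, b) ∈ Δ → (l, b') ∈ Δ → b = b'

/-- The graph of a structure, viewed as the set of its location–value points `f(ā) ↦ b`. -/
def graph {F : Type} {ar : F → ℕ} {D : Type} (X : Struc F ar D) : Set (Loc F ar D × D) :=
  {p | X.interp p.1.1 p.1.2 = p.2}

/-- The (non-trivial) update set Δ_P(X) = Δ⁺_P(X) \ X. -/
noncomputable def Delta {F : Type} {ar : F → ℕ} {D : Type}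
    (P : Prog F ar) (X : Struc F ar D) : Set (Loc F ar D × D) :=
  deltaPlus P X \ graph X

open Classical in
/-- Applying an update set to a structure: updated locations get their new value,
all other locations keep their old value. -/
noncomputable def applyUpd {F : Type} {ar : F → ℕ} {D : Type}
    (Δ : Set (Loc F ar D × D)) (X : Struc F ar D) : Struc F ar D :=
  ⟨fun f args => if h : ∃ b, (⟨f, args⟩, b) ∈ Δ then h.choose else X.interp f args⟩

/-- The next state τ_P(X), obtained by applying the non-trivial updates Δ_P(X) to `X`. -/
noncomputable def tau {F : Type} {ar : F → ℕ} {D : Type}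
    (P : Prog F ar) (X : Struc F ar D) : Struc F ar D :=
  applyUpd (Delta P X) X

/-- `ζ : X ≅ Y`: a bijection of carriers commuting with all interpretations. -/
def IsIso {F : Type} {ar : F → ℕ} {D E : Type} (ζ : D ≃ E)
    (X : Struc F ar D) (Y : Struc F ar E) : Prop :=
  ∀ (f : F) (args : Fin (ar f) → D),
    ζ (X.interp f args) = Y.interp f fun i => ζ (args i)


/-!
Term evaluation commutes with `ζ`, so `X` and `Y` satisfy the same conditions; hence a program
selects the same branches in both, and induction on `P` shows that `ζ` transports Δ⁺ (and, with
the graphs, Δ). In a clash-free update set each updated location carries a unique value, so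
applying corresponding update sets to isomorphic structures again gives isomorphic structures.
-/

variable {F : Type} {ar : F → ℕ} {D E : Type}

def Loc.congr (ζ : D ≃ E) : Loc F ar D ≃ Loc F ar E :=
  Equiv.sigmaCongrRight fun _ => Equiv.piCongrRight fun _ => ζ

def updateCongr (ζ : D ≃ E) : Loc F ar D × D ≃ Loc F ar E × E :=
  (Loc.congr ζ).prodCongr ζ

theorem clashFree.mono {Δ Δ' : Set (Loc F ar D × D)} (hΔ : clashFree Δ) (h : Δ' ⊆ Δ) :
    clashFree Δ' :=
  fun l b b' hb hb' => hΔ l b b' (h hb) (h hb')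

theorem updateCongr_apply (ζ : D ≃ E) (f : F) (a : Fin (ar f) → D) (b : D) :
    updateCongr ζ (⟨f, a⟩, b) = ((⟨f, fun i => ζ (a i)⟩ : Loc F ar E), ζ b) :=
  rfl

theorem applyUpd_interp_of_mem {Δ : Set (Loc F ar D × D)} (X : Struc F ar D)
    (hΔ : clashFree Δ) {f : F} {a : Fin (ar f) → D} {b : D} (h : (⟨f, a⟩, b) ∈ Δ) :
    (applyUpd Δ X).interp f a = b := by
  have hex : ∃ b, ((⟨f, a⟩ : Loc F ar D), b) ∈ Δ := ⟨b, h⟩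
  exact (dif_pos hex).trans (hΔ _ _ _ hex.choose_spec h)

theorem applyUpd_interp_of_forall_notMem {Δ : Set (Loc F ar D × D)} (X : Struc F ar D)
    {f : F} {a : Fin (ar f) → D} (h : ∀ b, (⟨f, a⟩, b) ∉ Δ) :
    (applyUpd Δ X).interp f a = X.interp f a := by
  simp only [applyUpd, dif_neg (not_exists.mpr h)]

namespace IsIso

variable {ζ : D ≃ E} {X : Struc F ar D} {Y : Struc F ar E}

theorem map_eval (hζ : IsIso ζ X Y) : ∀ t : Term F ar, ζ (eval X t) = eval Y t
  | .app f args => by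
    simp only [eval, hζ f, hζ.map_eval]

theorem condHolds_iff (hζ : IsIso ζ X Y) : ∀ c : Cond F ar, condHolds X c ↔ condHolds Y c
  | .eq s t => by simp only [condHolds, ← hζ.map_eval, ζ.apply_eq_iff_eq]
  | .not c => by simp only [condHolds, hζ.condHolds_iff c]
  | .and c d => by simp only [condHolds, hζ.condHolds_iff c, hζ.condHolds_iff d]
  | .or c d => by simp only [condHolds, hζ.condHolds_iff c, hζ.condHolds_iff d]

theorem mem_deltaPlus_iff (hζ : IsIso ζ X Y) :
    ∀ (P : Prog F ar) (p : Loc F ar D × D), p ∈ deltaPlus P X ↔ updateCongr ζ p ∈ deltaPlus P Y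
  | .skip, p => by simp [deltaPlus]
  | .assign f args rhs, p => by
    have hmap : updateCongr ζ (⟨f, fun i => eval X (args i)⟩, eval X rhs)
        = ((⟨f, fun i => eval Y (args i)⟩ : Loc F ar E), eval Y rhs) := by
      simp only [← hζ.map_eval]
      rfl
    simp only [deltaPlus, Set.mem_singleton_iff]
    exact ⟨fun h => h ▸ hmap, fun h => (updateCongr ζ).injective (h.trans hmap.symm)⟩
  | .cond c p q, u => by
    simp only [deltaPlus]
    rw [← hζ.condHolds_iff c]
    split_ifs
    · exact hζ.mem_deltaPlus_iff p u
    · exact hζ.mem_deltaPlus_iff q u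
  | .par p q, u => by
    simp only [deltaPlus, Set.mem_union, hζ.mem_deltaPlus_iff p u, hζ.mem_deltaPlus_iff q u]

theorem mem_graph_iff (hζ : IsIso ζ X Y) (p : Loc F ar D × D) :
    p ∈ graph X ↔ updateCongr ζ p ∈ graph Y := by
  obtain ⟨⟨f, a⟩, b⟩ := p
  change X.interp f a = b ↔ Y.interp f (fun i => ζ (a i)) = ζ b
  rw [← hζ, ζ.apply_eq_iff_eq]

theorem mem_Delta_iff (hζ : IsIso ζ X Y) (P : Prog F ar) (p : Loc F ar D × D) :
    p ∈ Delta P X ↔ updateCongr ζ p ∈ Delta P Y := by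
  simp only [Delta, Set.mem_sdiff, hζ.mem_deltaPlus_iff P, hζ.mem_graph_iff]

theorem applyUpd (hζ : IsIso ζ X Y) {Δ : Set (Loc F ar D × D)} {Δ' : Set (Loc F ar E × E)}
    (hΔΔ' : ∀ p, p ∈ Δ ↔ updateCongr ζ p ∈ Δ') (hΔ : clashFree Δ) (hΔ' : clashFree Δ') :
    IsIso ζ (applyUpd Δ X) (applyUpd Δ' Y) := by
  intro f a
  by_cases hupd : ∃ b, ((⟨f, a⟩ : Loc F ar D), b) ∈ Δ
  · obtain ⟨b, hb⟩ := hupd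
    have hb' : ((⟨f, fun i => ζ (a i)⟩ : Loc F ar E), ζ b) ∈ Δ' := (hΔΔ' _).mp hb
    rw [applyUpd_interp_of_mem X hΔ hb, applyUpd_interp_of_mem Y hΔ' hb']
  · have hupd' : ∀ c, ((⟨f, fun i => ζ (a i)⟩ : Loc F ar E), c) ∉ Δ' := fun c hc =>
      hupd ⟨ζ.symm c, (hΔΔ' ((⟨f, a⟩ : Loc F ar D), ζ.symm c)).mpr
        (by rw [updateCongr_apply, ζ.apply_symm_apply]; exact hc)⟩
    rw [applyUpd_interp_of_forall_notMem X (not_exists.mp hupd),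
      applyUpd_interp_of_forall_notMem Y hupd', hζ]

end IsIso

/-- ASM transitions respect isomorphisms: if `ζ : X ≅ Y` then an update
`f(ā) ↦ b` belongs to Δ⁺_P(X) iff `f(ζ(ā)) ↦ ζ(b)` belongs to Δ⁺_P(Y); consequently
(assuming no clashes) `ζ` is also an isomorphism from `τ(X)` to `τ(Y)`. -/
theorem deltaPlus_respects_iso {F : Type} {ar : F → ℕ} {D E : Type}
    (P : Prog F ar) (X : Struc F ar D) (Y : Struc F ar E) (ζ : D ≃ E)
    (hζ : IsIso ζ X Y) :
    (∀ (f : F) (a : Fin (ar f) → D) (b : D),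
        (⟨f, a⟩, b) ∈ deltaPlus P X ↔
          ((⟨f, fun i => ζ (a i)⟩ : Loc F ar E), ζ b) ∈ deltaPlus P Y) ∧
    (clashFree (deltaPlus P X) → clashFree (deltaPlus P Y) →
      IsIso ζ (tau P X) (tau P Y)) :=
  ⟨fun f a b => hζ.mem_deltaPlus_iff P (⟨f, a⟩, b), fun hX hY =>
    hζ.applyUpd (hζ.mem_Delta_iff P) (hX.mono Set.sdiff_subset) (hY.mono Set.sdiff_subset)⟩
end

section
/- Every ASM program P satisfies the Effective Transitions (Bounded Exploration) postulate: there is a finite set T of ground terms (the critical terms of P, namely all terms appearing in P, with left-hand sides of assignments contributing their proper subterms) such that any two states X, Y over the same domain that agree on the values of all terms in T have Δ⁺_P(X) = Δ⁺_P(Y). -/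
/-- The terms occurring in a condition. -/
def condTerms {F : Type} {ar : F → ℕ} : Cond F ar → List (Term F ar)
  | .eq s t => [s, t]
  | .not c => condTerms c
  | .and c d => condTerms c ++ condTerms d
  | .or c d => condTerms c ++ condTerms d

/-- The critical terms of a program: all terms appearing in it, with left-hand sides of
assignments contributing their (immediate) proper subterms instead. -/
def critTerms {F : Type} {ar : F → ℕ} : Prog F ar → List (Term F ar)
  | .skip => []
  | .assign _ args rhs => rhs :: List.ofFn fun i => args i
  | .cond c p q => condTerms c ++ critTerms p ++ critTerms q
  | .par p q => critTerms p ++ critTerms q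


lemma condHolds_congr {F : Type} {ar : F → ℕ} {D : Type} (c : Cond F ar)
    (X Y : Struc F ar D) (h : ∀ t ∈ condTerms c, eval X t = eval Y t) :
    condHolds X c ↔ condHolds Y c := by
  induction c with
  | eq s t =>
    simp only [condHolds]
    rw [h s (by simp [condTerms]), h t (by simp [condTerms])]
  | not c ih => exact not_congr (ih h)
  | and c d ihc ihd =>
    exact and_congr (ihc fun t ht => h t (by simp [condTerms, ht]))
      (ihd fun t ht => h t (by simp [condTerms, ht]))
  | or c d ihc ihd =>
    exact or_congr (ihc fun t ht => h t (by simp [condTerms, ht]))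
      (ihd fun t ht => h t (by simp [condTerms, ht]))

/-- every ASM program satisfies the Bounded Exploration postulate, with its
finite set of critical terms as witness: any two states over the same domain that agree
on the values of all critical terms have the same proposed update set. -/
theorem boundedExploration {F : Type} {ar : F → ℕ} {D : Type} (P : Prog F ar)
    (X Y : Struc F ar D) (h : ∀ t ∈ critTerms P, eval X t = eval Y t) :
    deltaPlus P X = deltaPlus P Y := by
  induction P with
  | skip => rfl
  | assign f args rhs =>
    simp only [deltaPlus]
    have hr : eval X rhs = eval Y rhs := h rhs (by simp [critTerms])
    have ha : (fun i => eval X (args i)) = fun i => eval Y (args i) :=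
      funext fun i => h (args i) (by simp [critTerms, List.mem_ofFn])
    rw [hr, ha]
  | cond c p q ihp ihq =>
    simp only [deltaPlus]
    have hc := condHolds_congr c X Y (fun t ht => h t (by simp [critTerms, ht]))
    have hp := ihp (fun t ht => h t (by simp [critTerms, ht]))
    have hq := ihq (fun t ht => h t (by simp [critTerms, ht]))
    by_cases hcx : condHolds X c
    · rw [if_pos hcx, if_pos (hc.mp hcx), hp]
    · rw [if_neg hcx, if_neg (fun hy => hcx (hc.mpr hy)), hq]
  | par p q ihp ihq =>
    simp only [deltaPlus]
    rw [ihp (fun t ht => h t (by simp [critTerms, ht])),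
        ihq (fun t ht => h t (by simp [critTerms, ht]))]
end
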